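/- arXiv:1101.3832 — 4 statements merged into one kernel-verified Lean document; each statement's English description precedes it below -/
import Mathlib

section
/- For −π/2 < λ < π/2 and f analytic on the unit disk with f(0)=0, f'(0)=1, f nonvanishing except at 0: Re(zf'(z)/f(z)) > 0 on 𝔻 if and only if g = K_{e^{iλ}cos λ}[f] satisfies Re(e^{−iλ}·z g'(z)/g(z)) > 0 on 𝔻. That is, the power deformation with exponent e^{iλ}cos λ carries the starlikeness condition to the λ-spirallikeness condition. -/
open Complex Metric Filter Topology

/-! With `s = z f'/f`, the identity `z K_c[f]'/K_c[f] = 1 - c + c s` turns the spirallike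
quantity for `c = e^{iλ} cos λ` into `e^{-iλ} - cos λ + cos λ · s`. Since `e^{-iλ} - cos λ`
is purely imaginary, its real part is `cos λ · Re s`, and `cos λ > 0` for `|λ| < π/2`. -/

lemma logDeriv_cexp_comp {h : ℂ → ℂ} {z : ℂ} (hh : DifferentiableAt ℂ h z) :
    logDeriv (fun w => exp (h w)) z = deriv h z := by
  rw [← Function.comp_def, logDeriv_comp differentiableAt_exp hh, logDeriv_exp, Pi.one_apply,
    one_mul]

lemma mul_logDeriv_mul_cexp_const_mul {L : ℂ → ℂ} {z : ℂ} (c : ℂ) (hz : z ≠ 0)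
    (hL : DifferentiableAt ℂ L z) :
    z * logDeriv (fun w => w * exp (c * L w)) z = 1 + c * (z * deriv L z) := by
  have hcL : DifferentiableAt ℂ (fun w => c * L w) z := hL.const_mul c
  rw [logDeriv_mul (f := fun w => w) (g := fun w => exp (c * L w)) z hz (exp_ne_zero _)
      differentiableAt_id hcL.cexp,
    logDeriv_id', logDeriv_cexp_comp hcL, deriv_const_mul c hL]
  field_simp

lemma mul_deriv_eq_mul_logDeriv_sub_one {f L : ℂ → ℂ} {z : ℂ} (hz : z ≠ 0)
    (hf : DifferentiableAt ℂ f z) (hL : DifferentiableAt ℂ L z)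
    (hLf : (fun w => exp (L w)) =ᶠ[𝓝 z] fun w => f w / w) :
    z * deriv L z = z * logDeriv f z - 1 := by
  have hfz : f z ≠ 0 := (div_ne_zero_iff.mp (hLf.eq_of_nhds ▸ exp_ne_zero (L z))).1
  rw [← logDeriv_cexp_comp hL, (logDeriv_congr_nhds hLf).eq_of_nhds,
    logDeriv_div (g := fun w => w) z hfz hz hf differentiableAt_id, logDeriv_id', mul_sub,
    mul_one_div_cancel hz]

lemma re_cexp_neg_mul_I_mul_one_add_sub_one (lam : ℝ) (s : ℂ) :
    (exp (-lam * I) * (1 + exp (lam * I) * Real.cos lam * (s - 1))).re = Real.cos lam * s.re := by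
  have hinv : exp (-lam * I) * exp (lam * I) = 1 := by rw [← exp_add]; simp
  have hre : (exp (-lam * I)).re = Real.cos lam := by
    rw [← ofReal_neg, exp_ofReal_mul_I_re, Real.cos_neg]
  have hsplit : exp (-lam * I) * (1 + exp (lam * I) * Real.cos lam * (s - 1))
      = exp (-lam * I) + Real.cos lam * (s - 1) := by
    linear_combination (Real.cos lam * (s - 1) : ℂ) * hinv
  rw [hsplit, add_re, hre, re_ofReal_mul, sub_re, one_re]
  ring

theorem power_deformation_spirallike_general
    (f L : ℂ → ℂ) (lam : ℝ) (hlam1 : -(Real.pi / 2) < lam) (hlam2 : lam < Real.pi / 2)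
    (hf : DifferentiableOn ℂ f (ball (0 : ℂ) 1))
    (hL : DifferentiableOn ℂ L (ball (0 : ℂ) 1))
    (hLf : ∀ z ∈ ball (0 : ℂ) 1, z ≠ 0 → Complex.exp (L z) = f z / z) :
    (∀ z ∈ ball (0 : ℂ) 1, z ≠ 0 → 0 < (z * deriv f z / f z).re) ↔
      (∀ z ∈ ball (0 : ℂ) 1, z ≠ 0 →
        0 < (Complex.exp (-(lam : ℂ) * Complex.I) *
              (z * deriv
                (fun w => w * Complex.exp
                  ((Complex.exp ((lam : ℂ) * Complex.I) * (Real.cos lam : ℂ)) * L w)) z /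
               (z * Complex.exp
                  ((Complex.exp ((lam : ℂ) * Complex.I) * (Real.cos lam : ℂ)) * L z)))).re) := by
  have hcos : 0 < Real.cos lam := Real.cos_pos_of_mem_Ioo ⟨hlam1, hlam2⟩
  refine forall₃_congr fun z hz hz0 => ?_
  have hLz : DifferentiableAt ℂ L z := hL.differentiableAt (isOpen_ball.mem_nhds hz)
  have hfz : DifferentiableAt ℂ f z := hf.differentiableAt (isOpen_ball.mem_nhds hz)
  have hexp : (fun w => exp (L w)) =ᶠ[𝓝 z] fun w => f w / w := by
    filter_upwards [isOpen_ball.mem_nhds hz, isOpen_compl_singleton.mem_nhds hz0]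
      with w hw hw0 using hLf w hw hw0
  have hg := mul_logDeriv_mul_cexp_const_mul (exp (lam * I) * Real.cos lam) hz0 hLz
  simp only [logDeriv_apply, ← mul_div_assoc] at hg
  rw [hg, mul_deriv_eq_mul_logDeriv_sub_one hz0 hfz hLz hexp, logDeriv_apply, ← mul_div_assoc,
    re_cexp_neg_mul_I_mul_one_add_sub_one, mul_pos_iff_of_pos_left hcos]

/-- For `-π/2 < λ < π/2`, a zero-free normalized analytic `f` on the
unit disk is starlike (`Re (z f'/f) > 0`) iff `g = K_{e^{iλ} cos λ}[f]`, given by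
`g z = z * exp ((e^{iλ} cos λ) * L z)`, is `λ`-spirallike:
`Re (e^{-iλ} * z g'/g) > 0` on the punctured disk. -/
theorem power_deformation_spirallike
    (f L : ℂ → ℂ) (lam : ℝ) (hlam1 : -(Real.pi / 2) < lam) (hlam2 : lam < Real.pi / 2)
    (hf : DifferentiableOn ℂ f (ball (0 : ℂ) 1))
    (hf0 : f 0 = 0) (hf'0 : deriv f 0 = 1)
    (hfz : ∀ z ∈ ball (0 : ℂ) 1, z ≠ 0 → f z ≠ 0)
    (hL : DifferentiableOn ℂ L (ball (0 : ℂ) 1))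
    (hL0 : L 0 = 0)
    (hLf : ∀ z ∈ ball (0 : ℂ) 1, z ≠ 0 → Complex.exp (L z) = f z / z) :
    (∀ z ∈ ball (0 : ℂ) 1, z ≠ 0 → 0 < (z * deriv f z / f z).re) ↔
      (∀ z ∈ ball (0 : ℂ) 1, z ≠ 0 →
        0 < (Complex.exp (-(lam : ℂ) * Complex.I) *
              (z * deriv
                (fun w => w * Complex.exp
                  ((Complex.exp ((lam : ℂ) * Complex.I) * (Real.cos lam : ℂ)) * L w)) z /
               (z * Complex.exp
                  ((Complex.exp ((lam : ℂ) * Complex.I) * (Real.cos lam : ℂ)) * L z)))).re) :=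
  power_deformation_spirallike_general f L lam hlam1 hlam2 hf hL hLf
end

section
/- Let M be a class of functions f analytic on 𝔻 with f(0)=0, f'(0)=1, f nonvanishing off 0, and let V(M) = {zf'(z)/f(z) : f ∈ M, z ∈ 𝔻}. Then the set of c ∈ ℂ such that K_c[f] has nonvanishing derivative on 𝔻 for every f ∈ M equals ℂ \ T(V(M)), where T(w) = 1/(1−w) (with T(1) = ∞ excluded from ℂ). -/
open Complex Metric Set Filter Topology

/-! Writing `f z / z = exp (L z)`, the derivative of `K_c[f] = z exp (c L)` is
`exp (c L z) (1 + c z L'(z))`, and `z L'(z) = z f'(z)/f(z) - 1`. Hence `K_c[f]'` vanishes at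
`z ≠ 0` exactly when `1 + c (w - 1) = 0` for `w = z f'(z)/f(z)`, i.e. when `w ≠ 1` and
`c = T w`; at `z = 0` the derivative is `1`. -/

theorem hasDerivAt_mul_exp_const_mul {L : ℂ → ℂ} {z : ℂ} (c : ℂ) (hL : DifferentiableAt ℂ L z) :
    HasDerivAt (fun w => w * exp (c * L w)) (exp (c * L z) * (1 + c * (z * deriv L z))) z :=
  ((hasDerivAt_id' z).mul (hL.hasDerivAt.const_mul c).cexp).congr_deriv (by ring)

theorem deriv_mul_exp_const_mul_eq_zero_iff {L : ℂ → ℂ} {z : ℂ} (c : ℂ)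
    (hL : DifferentiableAt ℂ L z) :
    deriv (fun w => w * exp (c * L w)) z = 0 ↔ 1 + c * (z * deriv L z) = 0 := by
  rw [(hasDerivAt_mul_exp_const_mul c hL).deriv, mul_eq_zero, or_iff_right (exp_ne_zero _)]

theorem mul_deriv_eq_mul_deriv_div_sub_one_of_exp_eq_div {f L : ℂ → ℂ} {z : ℂ} (hz : z ≠ 0)
    (hf : DifferentiableAt ℂ f z) (hL : DifferentiableAt ℂ L z) (hfz : f z ≠ 0)
    (hexp : (fun w => exp (L w)) =ᶠ[𝓝 z] fun w => f w / w) :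
    z * deriv L z = z * deriv f z / f z - 1 := by
  have hderiv : exp (L z) * deriv L z = (deriv f z * z - f z * 1) / z ^ 2 := by
    rw [← hL.hasDerivAt.cexp.deriv, ← (hf.hasDerivAt.div (hasDerivAt_id' z) hz).deriv]
    exact hexp.deriv_eq
  rw [hexp.eq_of_nhds] at hderiv
  field_simp at hderiv ⊢
  linear_combination hderiv

theorem one_add_mul_sub_one_eq_zero_iff (c w : ℂ) :
    1 + c * (w - 1) = 0 ↔ w ≠ 1 ∧ c = 1 / (1 - w) := by
  constructor
  · intro h
    have hw : w ≠ 1 := by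
      rintro rfl
      simp at h
    refine ⟨hw, ?_⟩
    rw [eq_div_iff (sub_ne_zero.mpr hw.symm)]
    linear_combination -h
  · rintro ⟨hw, rfl⟩
    field_simp [sub_ne_zero.mpr hw.symm]
    ring

theorem deriv_mul_exp_const_mul_eq_zero_iff_of_exp_eq_div {f L : ℂ → ℂ} {U : Set ℂ} {z : ℂ}
    (c : ℂ) (hU : IsOpen U) (hf : DifferentiableOn ℂ f U) (hf0 : ∀ z ∈ U, z ≠ 0 → f z ≠ 0)
    (hL : DifferentiableOn ℂ L U) (hexp : ∀ z ∈ U, z ≠ 0 → exp (L z) = f z / z) (hz : z ∈ U) :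
    deriv (fun w => w * exp (c * L w)) z = 0 ↔
      z ≠ 0 ∧ z * deriv f z / f z ≠ 1 ∧ c = 1 / (1 - z * deriv f z / f z) := by
  have hLz := hL.differentiableAt (hU.mem_nhds hz)
  rw [deriv_mul_exp_const_mul_eq_zero_iff c hLz]
  rcases eq_or_ne z 0 with rfl | hz0
  · simp
  have hexp_nhds : (fun w => exp (L w)) =ᶠ[𝓝 z] fun w => f w / w :=
    eventually_of_mem ((hU.inter isOpen_compl_singleton).mem_nhds ⟨hz, hz0⟩)
      fun w hw => hexp w hw.1 hw.2
  rw [mul_deriv_eq_mul_deriv_div_sub_one_of_exp_eq_div hz0 (hf.differentiableAt (hU.mem_nhds hz))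
    hLz (hf0 z hz hz0) hexp_nhds, one_add_mul_sub_one_eq_zero_iff]
  exact (and_iff_right hz0).symm

/-- Let `M` be a class of zero-free normalized analytic functions on
the unit disk (each recorded together with the branch `L` of `log (f z / z)` vanishing
at the origin).  Let `V(M) = {z f'(z)/f(z) : (f,L) ∈ M, z ∈ 𝔻, z ≠ 0}`.  Then
`{c : K_c[f]' never vanishes on 𝔻 for all f ∈ M} = ℂ \ T(V(M))`, where
`T w = 1/(1-w)` (the value `T 1 = ∞` being excluded from `ℂ`). -/
theorem exponent_set_eq_complement_of_T_image
    (M : Set ((ℂ → ℂ) × (ℂ → ℂ)))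
    (hM : ∀ p ∈ M,
      DifferentiableOn ℂ p.1 (ball (0 : ℂ) 1) ∧ p.1 0 = 0 ∧ deriv p.1 0 = 1 ∧
      (∀ z ∈ ball (0 : ℂ) 1, z ≠ 0 → p.1 z ≠ 0) ∧
      DifferentiableOn ℂ p.2 (ball (0 : ℂ) 1) ∧ p.2 0 = 0 ∧
      (∀ z ∈ ball (0 : ℂ) 1, z ≠ 0 → Complex.exp (p.2 z) = p.1 z / z)) :
    {c : ℂ | ∀ p ∈ M, ∀ z ∈ ball (0 : ℂ) 1,
        deriv (fun w => w * Complex.exp (c * p.2 w)) z ≠ 0}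
      = {c : ℂ | ∃ w ∈ {w : ℂ | ∃ p ∈ M, ∃ z ∈ ball (0 : ℂ) 1,
            z ≠ 0 ∧ w = z * deriv p.1 z / p.1 z},
          w ≠ 1 ∧ c = 1 / (1 - w)}ᶜ := by
  have key : ∀ c, ∀ p ∈ M, ∀ z ∈ ball (0 : ℂ) 1,
      deriv (fun w => w * exp (c * p.2 w)) z = 0 ↔
        z ≠ 0 ∧ z * deriv p.1 z / p.1 z ≠ 1 ∧ c = 1 / (1 - z * deriv p.1 z / p.1 z) := by
    intro c p hp z hz
    obtain ⟨hf, -, -, hf0, hL, -, hexp⟩ := hM p hp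
    exact deriv_mul_exp_const_mul_eq_zero_iff_of_exp_eq_div c isOpen_ball hf hf0 hL hexp hz
  ext c
  rw [mem_compl_iff, ← not_iff_not, not_not]
  simp only [mem_ofPred_eq, not_forall, not_not, exists_prop]
  constructor
  · rintro ⟨p, hp, z, hz, hK⟩
    obtain ⟨hz0, hc⟩ := (key c p hp z hz).1 hK
    exact ⟨_, ⟨p, hp, z, hz, hz0, rfl⟩, hc⟩
  · rintro ⟨_, ⟨p, hp, z, hz, hz0, rfl⟩, hc⟩
    exact ⟨p, hp, z, hz, (key c p hp z hz).2 ⟨hz0, hc⟩⟩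
end

section
/- The set of c ∈ ℂ for which the power deformation K_c[k] of the Koebe function k(z)=z/(1−z)² has nonvanishing derivative on the unit disk equals the closed disk of radius 1/2 centered at 1/2, i.e., {c : |c − 1/2| ≤ 1/2}. -/
open Complex Metric Set Filter Topology

/-!
Since `exp ∘ L = (1 - z)⁻²`, logarithmic differentiation gives `L' = 2 / (1 - z)`, hence
`(z e^{cL})' = e^{cL} (1 + (2c - 1) z) / (1 - z)`. This vanishes in the disk exactly when
`-1 / (2c - 1)` lies in it, i.e. when `‖2c - 1‖ > 1`.
-/

theorem one_sub_ne_zero_of_mem_ball {z : ℂ} (hz : z ∈ ball (0 : ℂ) 1) : 1 - z ≠ 0 :=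
  sub_ne_zero.2 fun h => by simp [← h] at hz

theorem hasDerivAt_of_cexp_eventuallyEq {L g : ℂ → ℂ} {g' z : ℂ} (hL : DifferentiableAt ℂ L z)
    (hexp : (fun w => exp (L w)) =ᶠ[𝓝 z] g) (hg : HasDerivAt g g' z) :
    HasDerivAt L (g' / g z) z := by
  have hderiv : exp (L z) * deriv L z = g' :=
    (hL.hasDerivAt.cexp.congr_of_eventuallyEq hexp.symm).unique hg
  rw [← hexp.self_of_nhds, ← hderiv, mul_div_cancel_left₀ _ (exp_ne_zero _)]
  exact hL.hasDerivAt

theorem hasDerivAt_mul_cexp_const_mul {L : ℂ → ℂ} {L' z : ℂ} (c : ℂ) (hL : HasDerivAt L L' z) :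
    HasDerivAt (fun w => w * exp (c * L w)) (exp (c * L z) * (1 + c * z * L')) z :=
  (hasDerivAt_id' (x := z)).mul (HasDerivAt.cexp (hL.const_mul c)) |>.congr_deriv (by ring)

theorem forall_mem_ball_one_add_mul_ne_zero_iff (a : ℂ) :
    (∀ z ∈ ball (0 : ℂ) 1, 1 + a * z ≠ 0) ↔ ‖a‖ ≤ 1 := by
  constructor
  · intro h
    by_contra! ha
    have ha0 : a ≠ 0 := norm_pos_iff.1 (one_pos.trans ha)
    refine h (-a⁻¹) ?_ (by field_simp; ring)
    simpa [norm_inv] using inv_lt_one_of_one_lt₀ ha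
  · intro ha z hz hzero
    have hz : ‖z‖ < 1 := by simpa using hz
    have : ‖a‖ * ‖z‖ = 1 := by
      rw [← norm_mul, eq_neg_of_add_eq_zero_right hzero, norm_neg, norm_one]
    nlinarith [norm_nonneg a, norm_nonneg z]

theorem norm_two_mul_sub_one_le_one_iff (c : ℂ) :
    ‖2 * c - 1‖ ≤ 1 ↔ c ∈ closedBall ((1 : ℂ) / 2) (1 / 2) := by
  have : ‖2 * c - 1‖ = 2 * dist c (1 / 2) := by
    rw [dist_eq, ← Complex.norm_two, ← norm_mul]
    ring_nf
  rw [mem_closedBall, this]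
  constructor <;> intro h <;> linarith

section Koebe

variable {L : ℂ → ℂ} (hL : DifferentiableOn ℂ L (ball (0 : ℂ) 1)) (hL0 : L 0 = 0)
  (hLk : ∀ z ∈ ball (0 : ℂ) 1, z ≠ 0 → exp (L z) = (z / (1 - z) ^ 2) / z)
include hL0 hLk

theorem cexp_koebe_log_eq {z : ℂ} (hz : z ∈ ball (0 : ℂ) 1) :
    exp (L z) = ((1 - z) ^ 2)⁻¹ := by
  rcases eq_or_ne z 0 with rfl | hz0
  · simp [hL0]
  · rw [hLk z hz hz0, div_div_cancel_left' hz0]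

include hL

theorem hasDerivAt_koebe_log {z : ℂ} (hz : z ∈ ball (0 : ℂ) 1) :
    HasDerivAt L (2 / (1 - z)) z := by
  have hne := one_sub_ne_zero_of_mem_ball hz
  have hg : HasDerivAt (fun w : ℂ => ((1 - w) ^ 2)⁻¹) (2 / (1 - z) ^ 3) z := by
    refine ((((hasDerivAt_id' (x := z)).const_sub 1).fun_pow 2).fun_inv
      (pow_ne_zero 2 hne)).congr_deriv ?_
    field_simp
    ring
  have hnhds : ball (0 : ℂ) 1 ∈ 𝓝 z := isOpen_ball.mem_nhds hz
  refine (hasDerivAt_of_cexp_eventuallyEq (hL.differentiableAt hnhds)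
    (eventually_of_mem hnhds fun w hw => cexp_koebe_log_eq hL0 hLk hw) hg).congr_deriv ?_
  field_simp

end Koebe

/-- For the Koebe function `k z = z/(1-z)²` with branch `L` of
`log (k z / z)` vanishing at the origin, the set of `c ∈ ℂ` for which the power
deformation `K_c[k] z = z * exp (c * L z)` has nonvanishing derivative on the unit
disk equals the closed disk `{c : |c - 1/2| ≤ 1/2}`. -/
theorem koebe_power_deformation_exponents
    (L : ℂ → ℂ)
    (hL : DifferentiableOn ℂ L (ball (0 : ℂ) 1))
    (hL0 : L 0 = 0)
    (hLk : ∀ z ∈ ball (0 : ℂ) 1, z ≠ 0 →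
      Complex.exp (L z) = (z / (1 - z) ^ 2) / z) :
    {c : ℂ | ∀ z ∈ ball (0 : ℂ) 1,
        deriv (fun w => w * Complex.exp (c * L w)) z ≠ 0}
      = closedBall ((1 : ℂ) / 2) (1 / 2) := by
  ext c
  rw [← norm_two_mul_sub_one_le_one_iff, ← forall_mem_ball_one_add_mul_ne_zero_iff]
  refine forall₂_congr fun z hz => ?_
  have hne := one_sub_ne_zero_of_mem_ball hz
  have hderiv : deriv (fun w => w * exp (c * L w)) z
      = exp (c * L z) * ((1 + (2 * c - 1) * z) / (1 - z)) := by
    rw [(hasDerivAt_mul_cexp_const_mul c (hasDerivAt_koebe_log hL hL0 hLk hz)).deriv]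
    field_simp
    ring
  simp [hderiv, exp_ne_zero, hne]
end

section
/- (Goodman) If f is starlike on the unit disk (f analytic, f(0)=0, f'(0)=1, and Re(zf'(z)/f(z)) > 0 on 𝔻), then |Arg(f(z)/z)| ≤ 2 arcsin|z| < π for all z ∈ 𝔻, where Arg(f(z)/z) is the imaginary part of the branch of log(f(z)/z) vanishing at the origin. -/
/-!
Put `h = exp (-L / 2)`, a branch of `(z / f z) ^ (1 / 2)` with `h 0 = 1`. Then
`1 - 2 z h' / h = z f' / f` has positive real part. If `w = 1 - h` reached modulus `1` in the
disk, Jack's lemma would give a point `z₁` with `|w z₁| = 1` and `z₁ w'(z₁) = k w(z₁)`, `k ≥ 1`,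
and there `Re (z f' / f) = 1 - k ≤ 0`. So `w` maps the disk into itself and Schwarz gives
`|1 - h z| ≤ |z|`. A point at distance at most `r < 1` from `1` has argument at most
`arcsin r`, and `Im L = -2 arg h`, because the continuous function `Im (-L / 2) - arg h` takes
values in `2πℤ` and vanishes at `0`.
-/

open Complex ComplexConjugate Metric Set Topology

lemma abs_im_le_norm_mul_norm_one_sub (w : ℂ) : |w.im| ≤ ‖w‖ * ‖1 - w‖ := by
  refine abs_le_of_sq_le_sq ?_ (by positivity)
  have hsq : ‖w‖ ^ 2 * ‖1 - w‖ ^ 2 = w.im ^ 2 + (w.re - normSq w) ^ 2 := by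
    simp only [← normSq_eq_norm_sq, normSq_apply, sub_re, sub_im, one_re, one_im]
    ring
  rw [mul_pow, hsq]
  exact le_add_of_nonneg_right (sq_nonneg _)

lemma abs_arg_one_sub_le_arcsin_norm {w : ℂ} (hw : ‖w‖ < 1) :
    |arg (1 - w)| ≤ Real.arcsin ‖w‖ := by
  have hre : 0 < (1 - w).re := by
    simpa using (re_le_norm w).trans_lt hw
  have hpos : 0 < ‖1 - w‖ := norm_pos_iff.mpr fun h => by simp [h] at hre
  have hquot : |(1 - w).im / ‖1 - w‖| ≤ ‖w‖ := by
    rw [abs_div, abs_norm, div_le_iff₀ hpos]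
    simpa using abs_im_le_norm_mul_norm_one_sub w
  rw [arg_of_re_nonneg hre.le, abs_le]
  constructor
  · rw [neg_le, ← Real.arcsin_neg]
    exact Real.monotone_arcsin ((neg_le_abs _).trans hquot)
  · exact Real.monotone_arcsin ((le_abs_self _).trans hquot)

lemma re_div_one_sub_of_norm_eq_one {w : ℂ} (h : ‖w‖ = 1) (hw : w ≠ 1) :
    (w / (1 - w)).re = -1 / 2 := by
  have hns : normSq w = 1 := by rw [normSq_eq_norm_sq, h, one_pow]
  have hden : normSq (1 - w) ≠ 0 := normSq_eq_zero.not.mpr (sub_ne_zero.mpr hw.symm)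
  rw [div_re, ← add_div, div_eq_iff hden]
  simp only [sub_re, sub_im, one_re, one_im, normSq_apply] at hns ⊢
  linear_combination (-1 / 2) * hns

lemma im_eq_zero_of_forall_re_mul_exp_sub_one_nonpos {a : ℂ}
    (h : ∀ θ : ℝ, (a * (exp (θ * I) - 1)).re ≤ 0) : a.im = 0 := by
  set φ : ℝ → ℝ := fun θ => a.re * (Real.cos θ - 1) - a.im * Real.sin θ
  have hφ : ∀ θ : ℝ, (a * (exp (θ * I) - 1)).re = φ θ := fun θ => by
    simp [φ, exp_mul_I, ← ofReal_cos, ← ofReal_sin, mul_re]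
  have hmax : IsLocalMax φ 0 :=
    Filter.Eventually.of_forall fun θ => (hφ θ ▸ h θ).trans_eq (by simp [φ])
  have hderiv : HasDerivAt φ (a.re * -Real.sin 0 - a.im * Real.cos 0) 0 :=
    (((Real.hasDerivAt_cos 0).sub_const 1).const_mul _).sub
      ((Real.hasDerivAt_sin 0).const_mul _)
  simpa using hmax.hasDerivAt_eq_zero hderiv

/-- The boundary step of Jack's lemma: `R ^ 2 ‖u z‖ ^ 2 - ‖z‖ ^ 2` is maximal over the closed disk
at `z₁`, so its derivative is nonpositive in every direction pointing into the disk. The tangent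
directions make `τ = conj (u z₁) * d * z₁` real, the direction towards `0` gives `1 ≤ τ`. -/
lemma exists_one_le_mul_deriv_eq_of_norm_le_norm_div {u : ℂ → ℂ} {d z₁ : ℂ}
    (hu : HasDerivAt u d z₁) (hle : ∀ z ∈ closedBall (0 : ℂ) ‖z₁‖, ‖u z‖ ≤ ‖z‖ / ‖z₁‖)
    (h1 : ‖u z₁‖ = 1) : ∃ k : ℝ, 1 ≤ k ∧ z₁ * d = k * u z₁ := by
  have hz₁ : z₁ ∈ closedBall (0 : ℂ) ‖z₁‖ := by simp
  set R := ‖z₁‖ with hRdef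
  have hR : 0 < R := by
    by_contra! hR
    have := hle z₁ hz₁
    simp [h1, ← hRdef, le_antisymm hR (norm_nonneg _)] at this
    linarith
  set F : ℂ → ℝ := fun z => R ^ 2 * ‖u z‖ ^ 2 - ‖z‖ ^ 2
  have hmax : IsMaxOn F (closedBall 0 R) z₁ := fun z hz => by
    have := hle z hz
    rw [le_div_iff₀ hR] at this
    have := pow_le_pow_left₀ (by positivity) this 2
    simp only [mem_ofPred_eq, F, h1, ← hRdef]
    linarith
  have hF := ((hu.hasFDerivAt.restrictScalars ℝ).norm_sq.const_mul (R ^ 2)).sub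
    (hasFDerivAt_id z₁).norm_sq
  have hdir : ∀ y ∈ closedBall (0 : ℂ) R,
      R ^ 2 * (d * (y - z₁) * conj (u z₁)).re ≤ ((y - z₁) * conj z₁).re := by
    intro y hy
    have := hmax.localize.hasFDerivWithinAt_nonpos hF.hasFDerivWithinAt
      (sub_mem_posTangentConeAt_of_segment_subset
        ((convex_closedBall 0 R).segment_subset hz₁ hy))
    simp [Complex.inner] at this ⊢
    linarith
  set τ := conj (u z₁) * d * z₁
  have hconj : conj z₁ * z₁ = ((R ^ 2 : ℝ) : ℂ) := by
    rw [mul_comm, mul_conj, normSq_eq_norm_sq]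
  have hτim : τ.im = 0 := by
    have := im_eq_zero_of_forall_re_mul_exp_sub_one_nonpos (a := τ - 1) fun θ => by
      have := hdir (z₁ * exp (θ * I)) (by simp [norm_exp_ofReal_mul_I, hRdef])
      rw [show d * (z₁ * exp (θ * I) - z₁) * conj (u z₁) = τ * (exp (θ * I) - 1) by ring,
        show (z₁ * exp (θ * I) - z₁) * conj z₁ = conj z₁ * z₁ * (exp (θ * I) - 1) by ring,
        hconj, re_ofReal_mul, mul_le_mul_iff_right₀ (by positivity)] at this
      rw [sub_one_mul, sub_re]
      linarith
    simpa using this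
  have hτre : 1 ≤ τ.re := by
    have := hdir 0 (mem_closedBall_self hR.le)
    rw [show d * (0 - z₁) * conj (u z₁) = -τ by ring,
      show (0 - z₁) * conj z₁ = -(conj z₁ * z₁) by ring, hconj, neg_re, neg_re, ofReal_re] at this
    nlinarith [pow_pos hR 2]
  have hτ : (τ.re : ℂ) = τ := Complex.ext rfl (by simp [hτim])
  refine ⟨τ.re, hτre, ?_⟩
  have hunit : conj (u z₁) * u z₁ = 1 := by
    rw [mul_comm, mul_conj, normSq_eq_norm_sq, h1, one_pow, ofReal_one]
  rw [hτ]
  linear_combination -(d * z₁) * hunit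

theorem norm_le_norm_div_of_mapsTo_ball {E F : Type*} [NormedAddCommGroup E] [NormedSpace ℂ E]
    [NormedAddCommGroup F] [NormedSpace ℂ F] {f : E → F} {R : ℝ} (hR : 0 < R)
    (hd : DiffContOnCl ℂ f (ball 0 R)) (h_maps : MapsTo f (ball 0 R) (closedBall 0 1))
    (h₀ : f 0 = 0) {z : E} (hz : z ∈ closedBall 0 R) : ‖f z‖ ≤ ‖z‖ / R := by
  rw [← closure_ball 0 hR.ne'] at hz
  refine ContinuousWithinAt.closure_le hz ((hd.continuousOn z hz).mono subset_closure).norm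
    (continuousWithinAt_id.norm.div_const R) fun y hy => ?_
  have := dist_le_div_mul_dist_of_mapsTo_ball hd.differentiableOn (by rwa [h₀]) hy
  rwa [h₀, dist_zero_right, dist_zero_right, one_div_mul_eq_div] at this

theorem exists_norm_eq_one_and_mul_deriv_eq {w : ℂ → ℂ} (hw : DifferentiableOn ℂ w (ball 0 1))
    (hw0 : w 0 = 0) {z₀ : ℂ} (hz₀ : z₀ ∈ ball (0 : ℂ) 1) (h : 1 ≤ ‖w z₀‖) :
    ∃ z ∈ ball (0 : ℂ) 1, ‖w z‖ = 1 ∧ ∃ k : ℝ, 1 ≤ k ∧ z * deriv w z = k * w z := by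
  have hsub : closedBall (0 : ℂ) ‖z₀‖ ⊆ ball 0 1 :=
    closedBall_subset_ball (mem_ball_zero_iff.mp hz₀)
  set K := closedBall (0 : ℂ) ‖z₀‖ ∩ (fun z => ‖w z‖) ⁻¹' Ici 1
  have hK : IsCompact K := (isCompact_closedBall _ _).of_isClosed_subset
    ((hw.continuousOn.mono hsub).norm.preimage_isClosed_of_isClosed isClosed_closedBall
      isClosed_Ici) inter_subset_left
  obtain ⟨z₁, ⟨hz₁K, hz₁w⟩, hmin⟩ :=
    hK.exists_isMinOn ⟨z₀, mem_closedBall_zero_iff.mpr le_rfl, h⟩ continuous_norm.continuousOn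
  have hz₁ : z₁ ∈ ball (0 : ℂ) 1 := hsub hz₁K
  have hρ : 0 < ‖z₁‖ := norm_pos_iff.mpr fun h0 => by norm_num [h0, hw0] at hz₁w
  have hmaps : MapsTo w (ball 0 ‖z₁‖) (closedBall 0 1) := fun z hz => by
    by_contra hwz
    have hz' := mem_ball_zero_iff.mp hz
    have hzK : z ∈ K := ⟨mem_closedBall_zero_iff.mpr
      (hz'.le.trans (mem_closedBall_zero_iff.mp hz₁K)), (not_le.mp (by simpa using hwz)).le⟩
    exact hz'.not_ge (hmin hzK)
  have hschwarz : ∀ z ∈ closedBall (0 : ℂ) ‖z₁‖, ‖w z‖ ≤ ‖z‖ / ‖z₁‖ := fun z hz =>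
    norm_le_norm_div_of_mapsTo_ball hρ
      ((hw.mono (closedBall_subset_ball (mem_ball_zero_iff.mp hz₁))).diffContOnCl_ball le_rfl)
      hmaps hw0 hz
  have hnorm : ‖w z₁‖ = 1 :=
    le_antisymm (by simpa [hρ.ne'] using hschwarz z₁ (by simp)) hz₁w
  obtain ⟨k, hk, heq⟩ := exists_one_le_mul_deriv_eq_of_norm_le_norm_div
    (hw.differentiableAt (isOpen_ball.mem_nhds hz₁)).hasDerivAt hschwarz hnorm
  exact ⟨z₁, hz₁, hnorm, k, hk, heq⟩

theorem mapsTo_one_sub_ball_of_re_pos {h : ℂ → ℂ} (hd : DifferentiableOn ℂ h (ball 0 1))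
    (h0 : h 0 = 1) (hne : ∀ z ∈ ball (0 : ℂ) 1, h z ≠ 0)
    (hpos : ∀ z ∈ ball (0 : ℂ) 1, z ≠ 0 → 0 < (1 - 2 * (z * deriv h z) / h z).re) :
    MapsTo (fun z => 1 - h z) (ball 0 1) (ball 0 1) := by
  intro z₀ hz₀
  by_contra hz₀w
  obtain ⟨z, hz, hnorm, k, hk, heq⟩ := exists_norm_eq_one_and_mul_deriv_eq (hd.const_sub 1)
    (by simp [h0]) hz₀ (by simpa using hz₀w)
  have hz0 : z ≠ 0 := by rintro rfl; simp [h0] at hnorm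
  rw [deriv_const_sub, mul_neg, neg_eq_iff_eq_neg] at heq
  have hquot : 1 - 2 * (z * deriv h z) / h z
      = 1 + ((2 * k : ℝ) : ℂ) * ((1 - h z) / (1 - (1 - h z))) := by
    rw [heq, sub_sub_cancel]
    push_cast
    ring
  have := hpos z hz hz0
  rw [hquot, add_re, one_re, re_ofReal_mul,
    re_div_one_sub_of_norm_eq_one hnorm (by simpa using hne z hz)] at this
  linarith

theorem IsPreconnected.im_eq_arg_exp {X : Type*} [TopologicalSpace X] {S : Set X}
    (hS : IsPreconnected S) {g : X → ℂ} (hg : ContinuousOn g S)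
    (hslit : ∀ x ∈ S, exp (g x) ∈ slitPlane) {x₀ : X} (hx₀ : x₀ ∈ S)
    (h₀ : (g x₀).im = arg (exp (g x₀))) {x : X} (hx : x ∈ S) :
    (g x).im = arg (exp (g x)) := by
  have hc : ContinuousOn (fun x => (g x).im - arg (exp (g x))) S :=
    (continuous_im.comp_continuousOn hg).sub
      (continuousOn_arg.comp (continuous_exp.comp_continuousOn hg) hslit)
  have hmem : MapsTo (fun x => (g x).im - arg (exp (g x))) S
      (AddSubgroup.zmultiples (2 * Real.pi)) := fun y _ => by
    dsimp only
    rw [arg_exp]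
    exact ⟨_, (self_sub_toIocMod _ _ _).symm⟩
  have := hS.constant_of_mapsTo (isDiscrete_iff_discreteTopology.mpr
    (inferInstanceAs (DiscreteTopology (AddSubgroup.zmultiples (2 * Real.pi))))) hc hmem hx hx₀
  simp only [h₀, sub_self] at this
  linarith

lemma mul_deriv_div_eq_one_add_mul_deriv {f L : ℂ → ℂ} {z : ℂ} (hz : z ≠ 0)
    (hL : DifferentiableAt ℂ L z) (hfL : ∀ᶠ ζ in 𝓝 z, exp (L ζ) = f ζ / ζ) :
    z * deriv f z / f z = 1 + z * deriv L z := by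
  have hf : f =ᶠ[𝓝 z] fun ζ => ζ * exp (L ζ) := by
    filter_upwards [hfL, isOpen_ne.mem_nhds hz] with ζ hζ hζ0
    rw [hζ, mul_div_cancel₀ _ hζ0]
  rw [hf.deriv_eq, hf.eq_of_nhds, ((hasDerivAt_id' z).fun_mul hL.hasDerivAt.cexp).deriv]
  field_simp

lemma one_sub_two_mul_deriv_exp_neg_half_div {L : ℂ → ℂ} {z : ℂ} (hL : DifferentiableAt ℂ L z) :
    1 - 2 * (z * deriv (fun ζ => exp (-L ζ / 2)) z) / exp (-L z / 2) = 1 + z * deriv L z := by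
  have hd : HasDerivAt (fun ζ => exp (-L ζ / 2)) (exp (-L z / 2) * (-deriv L z / 2)) z :=
    (hL.hasDerivAt.neg.div_const 2).cexp
  rw [hd.deriv]
  field_simp
  ring

theorem goodman_arg_bound_general
    (f L : ℂ → ℂ)
    (hstar : ∀ z ∈ ball (0 : ℂ) 1, z ≠ 0 → 0 < (z * deriv f z / f z).re)
    (hL : DifferentiableOn ℂ L (ball (0 : ℂ) 1))
    (hL0 : L 0 = 0)
    (hLf : ∀ z ∈ ball (0 : ℂ) 1, z ≠ 0 → Complex.exp (L z) = f z / z) :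
    ∀ z ∈ ball (0 : ℂ) 1,
      |(L z).im| ≤ 2 * Real.arcsin ‖z‖ ∧
        2 * Real.arcsin ‖z‖ < Real.pi := by
  set h : ℂ → ℂ := fun z => exp (-L z / 2)
  have hd : DifferentiableOn ℂ h (ball 0 1) := (hL.neg.div_const 2).cexp
  have hquot : ∀ z ∈ ball (0 : ℂ) 1, z ≠ 0 →
      1 - 2 * (z * deriv h z) / h z = z * deriv f z / f z := by
    intro z hz hz0
    have hLz := hL.differentiableAt (isOpen_ball.mem_nhds hz)
    rw [one_sub_two_mul_deriv_exp_neg_half_div hLz, mul_deriv_div_eq_one_add_mul_deriv hz0 hLz]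
    filter_upwards [isOpen_ball.mem_nhds hz, isOpen_ne.mem_nhds hz0] with ζ hζ hζ0
      using hLf ζ hζ hζ0
  have hmaps := mapsTo_one_sub_ball_of_re_pos hd (by simp [h, hL0]) (fun z _ => exp_ne_zero _)
    fun z hz hz0 => hquot z hz hz0 ▸ hstar z hz hz0
  have harg : ∀ z ∈ ball (0 : ℂ) 1, (-L z / 2).im = arg (h z) := fun z hz =>
    (convex_ball (0 : ℂ) 1).isPreconnected.im_eq_arg_exp (hL.continuousOn.neg.div_const 2)
      (fun z hz => ball_one_subset_slitPlane (by simpa [dist_eq, norm_sub_rev] using hmaps hz))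
      (mem_ball_self one_pos) (by simp [hL0]) hz
  intro z hz
  have hz1 : ‖z‖ < 1 := mem_ball_zero_iff.mp hz
  refine ⟨?_, by linarith [Real.arcsin_lt_pi_div_two.mpr hz1]⟩
  calc |(L z).im| = 2 * |arg (1 - (1 - h z))| := by
        rw [sub_sub_cancel, ← harg z hz]
        simp [abs_div]
        ring
    _ ≤ 2 * Real.arcsin ‖1 - h z‖ := by
        gcongr; exact abs_arg_one_sub_le_arcsin_norm (mem_ball_zero_iff.mp (hmaps hz))
    _ ≤ 2 * Real.arcsin ‖z‖ := by
        gcongr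
        exact norm_le_norm_of_mapsTo_ball (hd.const_sub 1)
          (hmaps.mono_right ball_subset_closedBall) (by simp [h, hL0]) hz1

/-- **Goodman.** If `f` is starlike on the unit disk and `L` is the
branch of `log (f z / z)` vanishing at the origin, then
`|Arg (f z / z)| = |Im (L z)| ≤ 2 arcsin |z| < π` for all `z` in the disk. -/
theorem goodman_arg_bound
    (f L : ℂ → ℂ)
    (hf : DifferentiableOn ℂ f (ball (0 : ℂ) 1))
    (hf0 : f 0 = 0) (hf'0 : deriv f 0 = 1)
    (hfz : ∀ z ∈ ball (0 : ℂ) 1, z ≠ 0 → f z ≠ 0)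
    (hstar : ∀ z ∈ ball (0 : ℂ) 1, z ≠ 0 → 0 < (z * deriv f z / f z).re)
    (hL : DifferentiableOn ℂ L (ball (0 : ℂ) 1))
    (hL0 : L 0 = 0)
    (hLf : ∀ z ∈ ball (0 : ℂ) 1, z ≠ 0 → Complex.exp (L z) = f z / z) :
    ∀ z ∈ ball (0 : ℂ) 1,
      |(L z).im| ≤ 2 * Real.arcsin ‖z‖ ∧
        2 * Real.arcsin ‖z‖ < Real.pi :=
  goodman_arg_bound_general f L hstar hL hL0 hLf
end
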